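/- Geometric proportion: in (ℚ, ·, ⁻¹, ℚ) (rationals with multiplication, multiplicative inverse, and every rational as constant), for all nonzero integers a, c and integers b, d, if b/a = d/c then the analogical proportion a : b :: c : d holds, characteristically justified by z → z · (b/a). -/
import Mathlib


/- Analogical proportions (Antić): single-variable terms over a language of algebras. -/

/-- A term over a language with function symbols `F` of arities `ar`, in the single variable `z`.
Constant symbols are function symbols of arity 0. -/
inductive Term (F : Type*) (ar : F → ℕ) : Type _ where
  | var : Term F ar
  | app : (f : F) → (Fin (ar f) → Term F ar) → Term F ar

/-- An algebra for the language `(F, ar)` with universe `A`. -/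
structure Alg (F : Type*) (ar : F → ℕ) (A : Type*) where
  interp : (f : F) → (Fin (ar f) → A) → A

variable {F : Type*} {ar : F → ℕ} {A B : Type*}

/-- Evaluation of a term at `z := x`. -/
def Term.eval (𝔸 : Alg F ar A) (x : A) : Term F ar → A
  | .var => x
  | .app f ts => 𝔸.interp f fun i => (ts i).eval 𝔸 x

/-- The set of justifications `s → t` of a pair `(a, b)` in the algebra `𝔸`:
pairs of terms such that `a = s(e)` and `b = t(e)` for some witness `e`. -/
def Jus (𝔸 : Alg F ar A) (a b : A) : Set (Term F ar × Term F ar) :=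
  {p | ∃ e : A, p.1.eval 𝔸 e = a ∧ p.2.eval 𝔸 e = b}

/-- Justifications of `a : b :: c : d` in `(𝔸, 𝔹)`. -/
def JusP (𝔸 : Alg F ar A) (𝔹 : Alg F ar B) (a b : A) (c d : B) :
    Set (Term F ar × Term F ar) :=
  Jus 𝔸 a b ∩ Jus 𝔹 c d

/-- `(𝔸, 𝔹) ⊨ a : b :: c : d`: the set of justifications is subset-maximal w.r.t. `d`. -/
def Proportion (𝔸 : Alg F ar A) (𝔹 : Alg F ar B) (a b : A) (c d : B) : Prop :=
  ∀ d' : B, JusP 𝔸 𝔹 a b c d ⊆ JusP 𝔸 𝔹 a b c d' →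
    JusP 𝔸 𝔹 a b c d' ⊆ JusP 𝔸 𝔹 a b c d

/-- `j` is a characteristic justification of `a : b :: c : d` in `(𝔸, 𝔹)`. -/
def CharJus (𝔸 : Alg F ar A) (𝔹 : Alg F ar B) (a b : A) (c d : B)
    (j : Term F ar × Term F ar) : Prop :=
  j ∈ JusP 𝔸 𝔹 a b c d ↔ Proportion 𝔸 𝔹 a b c d

/-- The language of `(ℚ, ·, ⁻¹, ℚ)`: multiplication, inverse, and a constant
symbol for every rational. -/
inductive QSym : Type | mul | inv | const : ℚ → QSym
def qAr : QSym → ℕ | .mul => 2 | .inv => 1 | .const _ => 0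

/-- The algebra `(ℚ, ·, ⁻¹, ℚ)` (with `0⁻¹ = 0`). -/
def QAlg : Alg QSym qAr ℚ :=
  ⟨fun f => match f with
    | .mul => fun v => v ⟨0, Nat.zero_lt_two⟩ * v ⟨1, Nat.one_lt_two⟩
    | .inv => fun v => (v ⟨0, Nat.zero_lt_one⟩)⁻¹
    | .const q => fun _ => q⟩

/-- The constant term `q`. -/
def constT (q : ℚ) : Term QSym qAr := Term.app (.const q) (fun i => i.elim0)
/-- The term `z · (b/a)`. -/
def mulConstT (q : ℚ) : Term QSym qAr :=
  Term.app .mul (![Term.var, constT q] : Fin 2 → _)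


lemma eval_mulConstT (q e : ℚ) : (mulConstT q).eval QAlg e = e * q := rfl

/-- geometric proportion: for nonzero integers `a, c` and
integers `b, d`, if `b/a = d/c` then `a : b :: c : d` holds in
`(ℚ, ·, ⁻¹, ℚ)`, characteristically justified by `z → z · (b/a)`. -/
theorem geometric_proportion (a c : ℤ) (ha : a ≠ 0) (hc : c ≠ 0) (b d : ℤ)
    (h : (b : ℚ) / a = (d : ℚ) / c) :
    Proportion QAlg QAlg (a : ℚ) (b : ℚ) (c : ℚ) (d : ℚ) ∧
      CharJus QAlg QAlg (a : ℚ) (b : ℚ) (c : ℚ) (d : ℚ)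
        (Term.var, mulConstT ((b : ℚ) / a)) := by
  have ha' : (a : ℚ) ≠ 0 := Int.cast_ne_zero.mpr ha
  have hc' : (c : ℚ) ≠ 0 := Int.cast_ne_zero.mpr hc
  have h1 : (a : ℚ) * ((b : ℚ) / a) = b := by field_simp
  have h2 : (c : ℚ) * ((b : ℚ) / a) = d := by rw [h]; field_simp
  have hj : (Term.var, mulConstT ((b : ℚ) / a)) ∈
      JusP QAlg QAlg (a : ℚ) (b : ℚ) (c : ℚ) (d : ℚ) :=
    ⟨⟨(a : ℚ), rfl, by rw [eval_mulConstT]; exact h1⟩,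
     ⟨(c : ℚ), rfl, by rw [eval_mulConstT]; exact h2⟩⟩
  have hprop : Proportion QAlg QAlg (a : ℚ) (b : ℚ) (c : ℚ) (d : ℚ) := by
    intro d' hsub
    obtain ⟨-, e, he1, he2⟩ := hsub hj
    have : d' = (d : ℚ) := by
      rw [eval_mulConstT] at he2
      have he1' : e = (c : ℚ) := he1
      rw [he1', h2] at he2
      exact he2.symm
    rw [this]
  exact ⟨hprop, ⟨fun _ => hprop, fun _ => hj⟩⟩
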